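/- arXiv:1707.02257 — 5 statements merged into one kernel-verified Lean document; each statement's English description precedes it below -/
import Mathlib

section
/- Let N ≥ 1 and let Φ_N(x,t) ∈ ℤ[x,t] be the N-th dynatomic polynomial. Then for every integer M ≥ 1, the identity Φ_N(f_t^M(x), t) = Φ_N(f_t^{M−1}(x), t) · Φ_N(−f_t^{M−1}(x), t) holds in ℤ[x,t]. Equivalently, the generalized dynatomic polynomial Φ_{M,N}(x,t), defined as the quotient Φ_N(f_t^M(x),t)/Φ_N(f_t^{M−1}(x),t), equals Φ_N(−f_t^{M−1}(x), t). -/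
noncomputable section

/-- The iterates `f_t^n(x)` of `f_t(x) = x² + t`, as polynomials in `x` over `ℤ[t]`
(so `fIter 0 = x` and `fIter (n+1) = (fIter n)² + t`). -/
def fIter : ℕ → Polynomial (Polynomial ℤ)
  | 0 => Polynomial.X
  | n + 1 => (fIter n) ^ 2 + Polynomial.C Polynomial.X

/-!
Since `f_t` is even, `f_t^n(x) - x` for `n ≥ 1` satisfies
`f_t^{n+1}(x) - f_t(x) = (f_t^n(x) - x)(f_t^n(x) + x)`, i.e. `P(f_t(x)) = P(x) · P(-x)`.
This relation is multiplicative, so it passes to the products in the Möbius formula and,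
cancelling the nonzero denominator, to their quotient `Φ_N`. Substituting `x ↦ f_t^{M-1}(x)`
gives the identity; the second claim is cancellation of `Φ_N(f_t^{M-1}(x), t) ≠ 0`.
-/

open Polynomial

section CompMulComp

variable {R : Type*} [CommRing R] {g h : R[X]}

lemma prod_comp_eq_mul_prod_comp {ι : Type*} (s : Finset ι) (P : ι → R[X])
    (hP : ∀ i ∈ s, (P i).comp g = P i * (P i).comp h) :
    (∏ i ∈ s, P i).comp g = (∏ i ∈ s, P i) * (∏ i ∈ s, P i).comp h := by
  rw [prod_comp, prod_comp, ← Finset.prod_mul_distrib]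
  exact Finset.prod_congr rfl hP

lemma comp_eq_mul_comp_of_mul_eq [IsDomain R] {Φ A B : R[X]} (hΦ : Φ * A = B)
    (hA : A.comp g = A * A.comp h) (hB : B.comp g = B * B.comp h) (hA0 : A * A.comp h ≠ 0) :
    Φ.comp g = Φ * Φ.comp h := by
  refine mul_right_cancel₀ hA0 ?_
  calc Φ.comp g * (A * A.comp h) = B.comp g := by rw [← hA, ← mul_comp, hΦ]
    _ = Φ * Φ.comp h * (A * A.comp h) := by rw [hB, ← hΦ, mul_comp]; ring

end CompMulComp

lemma fIter_add (m n : ℕ) : fIter (m + n) = (fIter m).comp (fIter n) := by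
  induction m with
  | zero => simp [fIter]
  | succ m ih =>
    rw [Nat.add_right_comm]
    simp only [fIter, ih, add_comp, pow_comp, C_comp]

lemma fIter_natDegree (n : ℕ) : (fIter n).natDegree = 2 ^ n := by
  induction n with
  | zero => simp [fIter]
  | succ n ih => rw [fIter, natDegree_add_C, natDegree_pow, ih, pow_succ, mul_comm]

lemma fIter_ne_C (n : ℕ) (c : Polynomial ℤ) : fIter n ≠ C c := by
  intro h
  have h2 := fIter_natDegree n
  rw [h, natDegree_C] at h2
  exact (pow_pos two_pos n).ne h2

lemma fIter_sub_X_ne_zero {n : ℕ} (hn : n ≠ 0) : fIter n - X ≠ 0 := by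
  rw [sub_ne_zero]
  intro h
  have h2 := fIter_natDegree n
  rw [h, natDegree_X] at h2
  exact (Nat.one_lt_two_pow hn).ne h2

lemma fIter_comp_neg_X {n : ℕ} (hn : n ≠ 0) : (fIter n).comp (-X) = fIter n := by
  obtain ⟨m, rfl⟩ := Nat.exists_eq_add_of_le' (Nat.one_le_iff_ne_zero.mpr hn)
  have hf_even : (fIter 1).comp (-X) = fIter 1 := by
    simp only [fIter, add_comp, pow_comp, X_comp, C_comp]
    ring
  rw [fIter_add, comp_assoc, hf_even]

lemma fIter_sub_X_comp_fIter_one {n : ℕ} (hn : n ≠ 0) :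
    (fIter n - X).comp (fIter 1) = (fIter n - X) * (fIter n - X).comp (-X) := by
  rw [sub_comp, sub_comp, X_comp, X_comp, ← fIter_add, fIter_comp_neg_X hn]
  simp only [fIter]
  ring

lemma prod_fIter_sub_X_comp_fIter_one {s : Finset ℕ} (hs : 0 ∉ s) :
    (∏ n ∈ s, (fIter n - X)).comp (fIter 1)
      = (∏ n ∈ s, (fIter n - X)) * (∏ n ∈ s, (fIter n - X)).comp (-X) :=
  prod_comp_eq_mul_prod_comp s _ fun _ hn =>
    fIter_sub_X_comp_fIter_one (ne_of_mem_of_not_mem hn hs)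

lemma prod_fIter_sub_X_ne_zero {s : Finset ℕ} (hs : 0 ∉ s) : ∏ n ∈ s, (fIter n - X) ≠ 0 :=
  Finset.prod_ne_zero_iff.mpr fun _ hn => fIter_sub_X_ne_zero (ne_of_mem_of_not_mem hn hs)

theorem stmt4_general (N : ℕ) (PhiN : Polynomial (Polynomial ℤ))
    (hPhi : PhiN *
        ∏ n ∈ N.divisors.filter (fun n => ArithmeticFunction.moebius (N / n) = -1),
          (fIter n - Polynomial.X)
      = ∏ n ∈ N.divisors.filter (fun n => ArithmeticFunction.moebius (N / n) = 1),
          (fIter n - Polynomial.X))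
    (M : ℕ) (hM : 1 ≤ M) :
    PhiN.comp (fIter M) = PhiN.comp (fIter (M - 1)) * PhiN.comp (-(fIter (M - 1))) ∧
    ∀ PhiMN : Polynomial (Polynomial ℤ),
      PhiMN * PhiN.comp (fIter (M - 1)) = PhiN.comp (fIter M) →
      PhiMN = PhiN.comp (-(fIter (M - 1))) := by
  have h0 : ∀ μ, 0 ∉ N.divisors.filter (fun n => ArithmeticFunction.moebius (N / n) = μ) :=
    fun _ h => lt_irrefl 0 (Nat.pos_of_mem_divisors (Finset.mem_of_mem_filter 0 h))
  have hPhi_ne : PhiN ≠ 0 := by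
    rintro rfl
    exact prod_fIter_sub_X_ne_zero (h0 1) (by rw [← hPhi, zero_mul])
  have hf : PhiN.comp (fIter 1) = PhiN * PhiN.comp (-X) :=
    comp_eq_mul_comp_of_mul_eq hPhi (prod_fIter_sub_X_comp_fIter_one (h0 _))
      (prod_fIter_sub_X_comp_fIter_one (h0 _))
      (mul_ne_zero (prod_fIter_sub_X_ne_zero (h0 _))
        (comp_neg_X_eq_zero_iff.not.mpr (prod_fIter_sub_X_ne_zero (h0 _))))
  obtain ⟨m, rfl⟩ := Nat.exists_eq_add_of_le' hM
  have hmain : PhiN.comp (fIter (m + 1)) = PhiN.comp (fIter m) * PhiN.comp (-fIter m) := by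
    rw [add_comm, fIter_add, ← comp_assoc, hf, mul_comp, comp_assoc, neg_comp, X_comp]
  have hne : PhiN.comp (fIter m) ≠ 0 := by
    rw [Ne, comp_eq_zero_iff, not_or, not_and]
    exact ⟨hPhi_ne, fun _ => fIter_ne_C m _⟩
  rw [Nat.add_sub_cancel]
  refine ⟨hmain, fun PhiMN h => mul_left_cancel₀ hne ?_⟩
  rw [mul_comm, h, hmain]

/-- Let `Φ_N(x,t)` be the `N`-th dynatomic polynomial, i.e. the
(unique) polynomial satisfying
`Φ_N · ∏_{n ∣ N, μ(N/n) = −1} (f_t^n(x) − x) = ∏_{n ∣ N, μ(N/n) = 1} (f_t^n(x) − x)`.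
Then for every `M ≥ 1`,
`Φ_N(f_t^M(x), t) = Φ_N(f_t^{M−1}(x), t) · Φ_N(−f_t^{M−1}(x), t)`;
equivalently, the generalized dynatomic polynomial `Φ_{M,N}` — the (unique) polynomial
with `Φ_{M,N} · Φ_N(f_t^{M−1}(x), t) = Φ_N(f_t^M(x), t)` — equals
`Φ_N(−f_t^{M−1}(x), t)`. -/
theorem stmt4 (N : ℕ) (hN : 1 ≤ N) (PhiN : Polynomial (Polynomial ℤ))
    (hPhi : PhiN *
        ∏ n ∈ N.divisors.filter (fun n => ArithmeticFunction.moebius (N / n) = -1),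
          (fIter n - Polynomial.X)
      = ∏ n ∈ N.divisors.filter (fun n => ArithmeticFunction.moebius (N / n) = 1),
          (fIter n - Polynomial.X))
    (M : ℕ) (hM : 1 ≤ M) :
    PhiN.comp (fIter M) = PhiN.comp (fIter (M - 1)) * PhiN.comp (-(fIter (M - 1))) ∧
    ∀ PhiMN : Polynomial (Polynomial ℤ),
      PhiMN * PhiN.comp (fIter (M - 1)) = PhiN.comp (fIter M) →
      PhiMN = PhiN.comp (-(fIter (M - 1))) :=
  stmt4_general N PhiN hPhi M hM
end
end

section
/- Let K be a field of characteristic zero, c ∈ K, and let M ≥ 1 and N ≥ 1 be integers. A point α ∈ K has preperiod exactly M and eventual period exactly N under f_c (i.e., preperiodic portrait (M,N)) if and only if the point β := −f_c^{M−1}(α) has exact period N under f_c and β ≠ f_c^{M−1}(α) (equivalently, f_c^{M−1}(α) ≠ 0). -/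
/-!
Write `γ = f_c^{M-1}(α)`. Since `f_c(z) = f_c(w)` exactly when `w = ±z`, the points `γ` and `-γ`
have the same positive iterates, and `f_c^M(α) = f_c(γ)` satisfies `f_c^n(f_c(γ)) = f_c(γ)` iff
`f_c^n(γ) = ±γ`, i.e. iff `γ` or `-γ` has period `n`. The preperiod being exactly `M` says that
`γ` is not periodic. Finally `γ` and `-γ` cannot both be periodic unless `γ = -γ`, so once `-γ` is
periodic, "`γ` not periodic" is the same as "`-γ ≠ γ`".
-/

open Function

theorem quadratic_eq_quadratic_iff {R : Type*} [CommRing R] [NoZeroDivisors R] {c : R}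
    {f : R → R} (hf : ∀ z, f z = z ^ 2 + c) (x y : R) : f x = f y ↔ x = y ∨ x = -y := by
  rw [hf, hf, add_left_inj, sq_eq_sq_iff_eq_or_eq_neg]

theorem iterate_add_apply_comm {X : Type*} (f : X → X) (m n : ℕ) (x : X) :
    f^[m + n] x = f^[n] (f^[m] x) := by
  rw [add_comm, iterate_add_apply]

theorem not_exists_isPeriodicPt_iterate_le_iff {X : Type*} (f : X → X) (k : ℕ) (x : X) :
    (∀ m < k + 1, ¬∃ n, 0 < n ∧ IsPeriodicPt f n (f^[m] x)) ↔
      ∀ n, 0 < n → ¬IsPeriodicPt f n (f^[k] x) := by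
  refine ⟨fun h n hn hper => h k k.lt_succ_self ⟨n, hn, hper⟩, ?_⟩
  rintro h m hm ⟨n, hn, hper⟩
  have hk : k - m + m = k := Nat.sub_add_cancel (Nat.le_of_lt_succ hm)
  exact h n hn (by simpa only [← iterate_add_apply, hk] using hper.apply_iterate (k - m))

section EvenTwoToOne

variable {X : Type*} [Neg X] {f : X → X} (hf : ∀ x y, f x = f y ↔ x = y ∨ x = -y)
include hf

theorem iterate_neg_eq_iterate {n : ℕ} (hn : 0 < n) (x : X) : f^[n] (-x) = f^[n] x := by
  obtain ⟨k, rfl⟩ := Nat.exists_eq_add_of_lt hn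
  rw [zero_add, iterate_succ_apply, iterate_succ_apply, (hf (-x) x).2 (Or.inr rfl)]

theorem isPeriodicPt_apply_iff {n : ℕ} (hn : 0 < n) (x : X) :
    IsPeriodicPt f n (f x) ↔ IsPeriodicPt f n x ∨ IsPeriodicPt f n (-x) := by
  rw [IsPeriodicPt, IsFixedPt, ← iterate_succ_apply, iterate_succ_apply', hf,
    IsPeriodicPt, IsPeriodicPt, IsFixedPt, IsFixedPt, iterate_neg_eq_iterate hf hn]

theorem neg_eq_self_of_isPeriodicPt {m n : ℕ} (hm : 0 < m) (hn : 0 < n) {x : X}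
    (hx : IsPeriodicPt f m x) (hnx : IsPeriodicPt f n (-x)) : -x = x := by
  have hmn : 0 < m * n := Nat.mul_pos hm hn
  calc -x = f^[m * n] (-x) := (hnx.const_mul m).symm
    _ = f^[m * n] x := iterate_neg_eq_iterate hf hmn x
    _ = x := hx.mul_const n

theorem exact_period_apply_iff {N : ℕ} (hN : 0 < N) (x : X) :
    (IsPeriodicPt f N (f x) ∧ (∀ n, 0 < n → n < N → ¬IsPeriodicPt f n (f x)) ∧
        ∀ n, 0 < n → ¬IsPeriodicPt f n x) ↔
      (IsPeriodicPt f N (-x) ∧ (∀ n, 0 < n → n < N → ¬IsPeriodicPt f n (-x)) ∧ -x ≠ x) := by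
  constructor
  · rintro ⟨hper, hmin, hx⟩
    have hnx : IsPeriodicPt f N (-x) :=
      ((isPeriodicPt_apply_iff hf hN x).1 hper).resolve_left (hx N hN)
    refine ⟨hnx, fun n hn hnN hn' => hmin n hn hnN ((isPeriodicPt_apply_iff hf hn x).2 (.inr hn')),
      fun hneg => hx N hN (hneg ▸ hnx)⟩
  · rintro ⟨hnx, hmin, hneg⟩
    have hx : ∀ n, 0 < n → ¬IsPeriodicPt f n x := fun n hn hper =>
      hneg (neg_eq_self_of_isPeriodicPt hf hn hN hper hnx)
    refine ⟨(isPeriodicPt_apply_iff hf hN x).2 (.inr hnx), fun n hn hnN hper => ?_, hx⟩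
    exact ((isPeriodicPt_apply_iff hf hn x).1 hper).elim (hx n hn) (hmin n hn hnN)

theorem portrait_iff {N : ℕ} (hN : 0 < N) (k : ℕ) (α : X) :
    (IsPeriodicPt f N (f (f^[k] α)) ∧ (∀ n, 0 < n → n < N → ¬IsPeriodicPt f n (f (f^[k] α))) ∧
        ∀ m < k + 1, ¬∃ n, 0 < n ∧ IsPeriodicPt f n (f^[m] α)) ↔
      (IsPeriodicPt f N (-f^[k] α) ∧ (∀ n, 0 < n → n < N → ¬IsPeriodicPt f n (-f^[k] α)) ∧
        -f^[k] α ≠ f^[k] α) := by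
  rw [not_exists_isPeriodicPt_iterate_le_iff]
  exact exact_period_apply_iff hf hN _

end EvenTwoToOne

theorem stmt5_general (K : Type) [Field K] (c : K) (M N : ℕ)
    (hM : 1 ≤ M) (hN : 1 ≤ N) (α : K)
    (f : K → K) (hf : ∀ z, f z = z ^ 2 + c) :
    (f^[M + N] α = f^[M] α ∧
      (∀ n, 0 < n → n < N → f^[M + n] α ≠ f^[M] α) ∧
      (∀ m, m < M → ¬ ∃ n, 0 < n ∧ f^[m + n] α = f^[m] α))
    ↔ (f^[N] (-(f^[M - 1] α)) = -(f^[M - 1] α) ∧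
      (∀ n, 0 < n → n < N → f^[n] (-(f^[M - 1] α)) ≠ -(f^[M - 1] α)) ∧
      -(f^[M - 1] α) ≠ f^[M - 1] α) := by
  obtain ⟨k, rfl⟩ := Nat.exists_eq_add_of_le' hM
  simp only [iterate_add_apply_comm, iterate_one, Nat.add_sub_cancel]
  exact portrait_iff (quadratic_eq_quadratic_iff hf) hN k α

/-- Let `K` be a field of characteristic zero, `c ∈ K`,
`f = f_c(z) = z² + c`, and `M, N ≥ 1`.  A point `α ∈ K` has preperiodic portrait
`(M, N)` for `f_c` (preperiod exactly `M` and eventual period exactly `N`) if and only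
if `β := −f_c^{M−1}(α)` has exact period `N` under `f_c` and `β ≠ f_c^{M−1}(α)`. -/
theorem stmt5 (K : Type) [Field K] [CharZero K] (c : K) (M N : ℕ)
    (hM : 1 ≤ M) (hN : 1 ≤ N) (α : K)
    (f : K → K) (hf : ∀ z, f z = z ^ 2 + c) :
    (f^[M + N] α = f^[M] α ∧
      (∀ n, 0 < n → n < N → f^[M + n] α ≠ f^[M] α) ∧
      (∀ m, m < M → ¬ ∃ n, 0 < n ∧ f^[m + n] α = f^[m] α))
    ↔ (f^[N] (-(f^[M - 1] α)) = -(f^[M - 1] α) ∧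
      (∀ n, 0 < n → n < N → f^[n] (-(f^[M - 1] α)) ≠ -(f^[M - 1] α)) ∧
      -(f^[M - 1] α) ≠ f^[M - 1] α) :=
  stmt5_general K c M N hM hN α f hf
end

section
/- Let K be a number field and c ∈ K. Then: (1) the graph G(f_c,K) is admissible — that is, every β ∈ PrePer(f_c,K) has either 0 or 2 preimages α ∈ K with α² + c = β, and for each N ≥ 2 the number of α ∈ K of exact period N under f_c is at most D(N) — if and only if 0 is not preperiodic for f_c; (2) G(f_c,K) is strongly admissible — admissible and, in addition, f_c has either 0 or 2 fixed points in K — if and only if 0 is not preperiodic for f_c and c ≠ 1/4. -/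
/-! The `K`-rational preimages of `β` under `f_c` are the square roots of `β - c`, so there are
`0` or `2` of them unless `β = c`, whose only preimage is the critical point `0`; and `c = f_c(0)`
is preperiodic exactly when `0` is. Likewise the fixed points of `f_c` correspond to the square
roots of `1 - 4c`.

The bound `D(N)` holds for every `c`; indeed `∑_{n ∣ N} μ(N/n) d^n` bounds the number of points of
exact period `N` of any polynomial of degree `d ≥ 2` in characteristic zero. Over an algebraic
closure, let `α` have minimal period `k` and let `λ` be the multiplier of its cycle. As a root of
`f^n(z) - z`, the point `α` has multiplicity `0` if `k ∤ n`, and `1` if `k ∣ n` but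
`λ ^ (n / k) ≠ 1`; if `λ` is a root of unity of order `r`, the multiplicity is one and the same
`m ≥ 1` at all multiples of `kr`, because composing with a map tangent to the identity at `α` does
not change it. Möbius inversion over the divisors of `N` therefore gives
`[k = N] + (m - 1) [kr = N] ≥ [k = N]` at each `α`, and summing over all `α` turns the
multiplicities of the roots of `f^n(z) - z` into `d^n`. -/

noncomputable section

def DD (N : ℕ) : ℤ := ∑ n ∈ N.divisors, ArithmeticFunction.moebius (N / n) * 2 ^ n

open Polynomial Function ArithmeticFunction
open scoped ArithmeticFunction.Moebius

theorem Nat.sum_divisors_moebius_ite_dvd {N : ℕ} (hN : N ≠ 0) (a : ℕ) :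
    ∑ n ∈ N.divisors, (if a ∣ n then μ (N / n) else 0) = if a = N then 1 else 0 := by
  have h := (sum_eq_iff_sum_smul_moebius_eq (f := fun i => if i = a then (1 : ℤ) else 0)
    (g := fun n => if a ∣ n then 1 else 0)).mp (fun n hn => by
      simp [Finset.sum_ite_eq', Nat.mem_divisors, hn.ne']) N (Nat.pos_of_ne_zero hN)
  rw [Nat.sum_divisorsAntidiagonal' (f := fun x y => μ x • if a ∣ y then (1 : ℤ) else 0)] at h
  simpa [eq_comm] using h

namespace Function

variable {α : Type*} {f : α → α} {x : α}

def IsPreperiodicPt (f : α → α) (x : α) : Prop :=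
  ∃ m n : ℕ, m < n ∧ f^[m] x = f^[n] x

theorem isPreperiodicPt_apply_iff : IsPreperiodicPt f (f x) ↔ IsPreperiodicPt f x := by
  refine ⟨fun ⟨m, n, hmn, h⟩ => ⟨m + 1, n + 1, by omega, by simpa only [iterate_succ_apply]⟩,
    fun ⟨m, n, hmn, h⟩ => ⟨m, n, hmn, ?_⟩⟩
  simp only [← iterate_succ_apply, iterate_succ_apply', h]

theorem minimalPeriod_eq_iff_of_pos {N : ℕ} (hN : 0 < N) :
    minimalPeriod f x = N ↔
      IsPeriodicPt f N x ∧ ∀ k, 0 < k → k < N → ¬ IsPeriodicPt f k x := by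
  refine ⟨fun h => ⟨h ▸ isPeriodicPt_minimalPeriod f x, fun k hk hkN =>
    not_isPeriodicPt_of_pos_of_lt_minimalPeriod hk.ne' (h ▸ hkN)⟩, fun ⟨hper, hmin⟩ => ?_⟩
  refine (hper.minimalPeriod_le hN).antisymm (not_lt.mp fun hlt => ?_)
  exact hmin _ (hper.minimalPeriod_pos hN) hlt (isPeriodicPt_minimalPeriod f x)

theorem Semiconj.minimalPeriod_apply_eq {β : Type*} {fa : α → α} {fb : β → β} {g : α → β}
    (h : Semiconj g fa fb) (hg : Injective g) (x : α) :
    minimalPeriod fb (g x) = minimalPeriod fa x :=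
  minimalPeriod_eq_minimalPeriod_iff.mpr fun n => by
    simp only [IsPeriodicPt, IsFixedPt, ← (h.iterate_right n) x, hg.eq_iff]

end Function

namespace Polynomial

section CommSemiring

variable {R : Type*} [CommSemiring R]

theorem iterate_comp_eq_comp_iterate_comp_X (p q : R[X]) (n : ℕ) :
    p.comp^[n] q = (p.comp^[n] X).comp q := by
  induction n with
  | zero => simp
  | succ n ih => rw [iterate_succ_apply', iterate_succ_apply', ih, comp_assoc]

theorem iterate_comp_X_mul (p : R[X]) (m n : ℕ) :
    p.comp^[m * n] X = (p.comp^[m] X).comp^[n] X := by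
  rw [iterate_mul]
  exact congrArg (·^[n] X) (_root_.funext (iterate_comp_eq_comp_iterate_comp_X p · m))

variable {g : R[X]} {α : R}

theorem eval_iterate_comp_X_of_isFixedPt (h : g.eval α = α) (k : ℕ) :
    (g.comp^[k] X).eval α = α := by
  rw [iterate_comp_eval, eval_X]
  exact iterate_fixed h k

theorem eval_derivative_iterate_comp_X_of_isFixedPt (h : g.eval α = α) (k : ℕ) :
    (derivative (g.comp^[k] X)).eval α = (derivative g).eval α ^ k := by
  induction k with
  | zero => simp
  | succ k ih =>
    rw [iterate_succ_apply', derivative_comp, eval_mul, eval_comp,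
      eval_iterate_comp_X_of_isFixedPt h, ih, pow_succ]

end CommSemiring

section CommRing

variable {R : Type*} [CommRing R]

theorem isRoot_iterate_comp_X_sub_X {p : R[X]} {n : ℕ} {x : R} :
    (p.comp^[n] X - X).IsRoot x ↔ IsPeriodicPt (p.eval ·) n x := by
  simp [IsRoot, sub_eq_zero, IsPeriodicPt, IsFixedPt]

theorem exists_eq_X_sub_C_mul_of_isRoot {r : R[X]} {α : R} (h : r.IsRoot α) :
    ∃ w, r = (X - C α) * w ∧ w.eval α = (derivative r).eval α := by
  refine ⟨r /ₘ (X - C α), (mul_divByMonic_eq_iff_isRoot.mpr h).symm, ?_⟩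
  conv_rhs => rw [← mul_divByMonic_eq_iff_isRoot.mpr h]
  simp [derivative_mul]

theorem exists_comp_eq_X_sub_C_pow_mul {r q : R[X]} {α : R} (hr : r.eval α = α)
    (hr' : (derivative r).eval α = 1) (m : ℕ) :
    ∃ U, ((X - C α) ^ m * q).comp r = (X - C α) ^ m * U ∧ U.eval α = q.eval α := by
  obtain ⟨w, hw, hwα⟩ := exists_eq_X_sub_C_mul_of_isRoot (r := r - C α) (α := α)
    (by simp [hr])
  refine ⟨w ^ m * q.comp r, ?_, ?_⟩
  · rw [mul_comp, pow_comp, sub_comp, X_comp, C_comp, hw, mul_pow, mul_assoc]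
  · simp [hwα, hr, hr']

theorem rootMultiplicity_eq_one_of_isRoot {p : R[X]} {a : R} (h : p.IsRoot a)
    (h' : ¬ (derivative p).IsRoot a) : rootMultiplicity a p = 1 := by
  have hp : p ≠ 0 := by rintro rfl; simp at h'
  have hpos := (rootMultiplicity_pos hp).mpr h
  have hle := mt (one_lt_rootMultiplicity_iff_isRoot hp).mp (by tauto)
  omega

theorem rootMultiplicity_X_sub_C_pow_mul {S : R[X]} {α : R} (m : ℕ) (hS : S.eval α ≠ 0) :
    rootMultiplicity α ((X - C α) ^ m * S) = m := by
  rw [mul_comm, rootMultiplicity_mul_X_sub_C_pow (by rintro rfl; simp at hS),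
    rootMultiplicity_eq_zero hS, zero_add]

variable [IsDomain R]

theorem natDegree_iterate_comp_X_sub_X {p : R[X]} (hp : 1 < p.natDegree) {n : ℕ} (hn : n ≠ 0) :
    (p.comp^[n] X - X).natDegree = p.natDegree ^ n := by
  have hdeg : (p.comp^[n] X).natDegree = p.natDegree ^ n := by
    simp [natDegree_iterate_comp]
  rw [natDegree_sub_eq_left_of_natDegree_lt] <;> rw [hdeg]
  simpa using Nat.one_lt_pow hn hp

theorem iterate_comp_X_sub_X_ne_zero {p : R[X]} (hp : 1 < p.natDegree) {n : ℕ} (hn : n ≠ 0) :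
    p.comp^[n] X - X ≠ 0 := by
  intro h
  have := natDegree_iterate_comp_X_sub_X hp hn
  rw [h, natDegree_zero] at this
  exact (pow_pos (by omega) n).ne this

variable [CharZero R]

theorem rootMultiplicity_iterate_comp_X_sub_X_of_derivative_eq_one {g : R[X]} {α : R}
    (hg : g ≠ X) (hfix : g.eval α = α) (hder : (derivative g).eval α = 1) {j : ℕ}
    (hj : j ≠ 0) : rootMultiplicity α (g.comp^[j] X - X) = rootMultiplicity α (g - X) := by
  set m := rootMultiplicity α (g - X)
  set q := (g - X) /ₘ (X - C α) ^ m
  have hq : (X - C α) ^ m * q = g - X := pow_mul_divByMonic_rootMultiplicity_eq (g - X) α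
  have hqα : q.eval α ≠ 0 := eval_divByMonic_pow_rootMultiplicity_ne_zero α (sub_ne_zero.mpr hg)
  have hstep : ∀ i, ∃ U : R[X], g.comp^[i + 1] X - g.comp^[i] X = (X - C α) ^ m * U ∧
      U.eval α = q.eval α := fun i => by
    have hcomp : g.comp^[i + 1] X - g.comp^[i] X = (g - X).comp (g.comp^[i] X) := by
      rw [iterate_succ_apply', sub_comp, X_comp]
    rw [hcomp, ← hq]
    exact exists_comp_eq_X_sub_C_pow_mul (eval_iterate_comp_X_of_isFixedPt hfix i)
      (by rw [eval_derivative_iterate_comp_X_of_isFixedPt hfix, hder, one_pow]) m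
  choose U hU hUα using hstep
  have htele : g.comp^[j] X - X = (X - C α) ^ m * ∑ i ∈ Finset.range j, U i := by
    rw [Finset.mul_sum, ← Finset.sum_congr rfl fun i _ => hU i,
      Finset.sum_range_sub (fun i => g.comp^[i] X) j]
    rfl
  -- the cofactor takes the value `j * q(α) ≠ 0` at `α`
  rw [htele, rootMultiplicity_X_sub_C_pow_mul]
  simp [eval_finsetSum, hUα, hqα, hj]

theorem rootMultiplicity_iterate_comp_X_sub_X_of_isFixedPt {p : R[X]} (hp : 1 < p.natDegree)
    {α : R} (hα : p.eval α = α) {k : ℕ} (hk : k ≠ 0) :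
    rootMultiplicity α (p.comp^[k] X - X) =
      if orderOf ((derivative p).eval α) ∣ k then
        rootMultiplicity α (p.comp^[orderOf ((derivative p).eval α)] X - X)
      else 1 := by
  set r := orderOf ((derivative p).eval α)
  split_ifs with hrk
  · obtain ⟨j, rfl⟩ := hrk
    have hr : r ≠ 0 := by rintro h; simp [h] at hk
    rw [iterate_comp_X_mul]
    refine rootMultiplicity_iterate_comp_X_sub_X_of_derivative_eq_one
      (sub_ne_zero.mp (iterate_comp_X_sub_X_ne_zero hp hr))
      (eval_iterate_comp_X_of_isFixedPt hα r) ?_ (right_ne_zero_of_mul hk)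
    rw [eval_derivative_iterate_comp_X_of_isFixedPt hα, pow_orderOf_eq_one]
  · refine rootMultiplicity_eq_one_of_isRoot ?_ ?_
    · simp [IsRoot, eval_iterate_comp_X_of_isFixedPt hα]
    · rw [IsRoot, derivative_sub, derivative_X, eval_sub, eval_one,
        eval_derivative_iterate_comp_X_of_isFixedPt hα, sub_eq_zero]
      exact mt orderOf_dvd_of_pow_eq_one hrk

theorem ite_le_sum_divisors_moebius_mul_rootMultiplicity {p : R[X]} (hp : 1 < p.natDegree)
    {N : ℕ} (hN : N ≠ 0) {α : R} (hα : IsPeriodicPt (p.eval ·) N α) :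
    (if minimalPeriod (p.eval ·) α = N then 1 else 0) ≤
      ∑ n ∈ N.divisors, μ (N / n) * (rootMultiplicity α (p.comp^[n] X - X) : ℤ) := by
  set d := minimalPeriod (p.eval ·) α
  have hd : 0 < d := hα.minimalPeriod_pos (Nat.pos_of_ne_zero hN)
  set g := p.comp^[d] X
  have hg : 1 < g.natDegree := by
    simpa [g, natDegree_iterate_comp] using Nat.one_lt_pow hd.ne' hp
  have hgα : g.eval α = α := by
    rw [iterate_comp_eval, eval_X]
    exact iterate_minimalPeriod
  set r := orderOf ((derivative g).eval α)
  set m : ℤ := (rootMultiplicity α (g.comp^[r] X - X) : ℤ)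
  have hterm : ∀ n ∈ N.divisors, μ (N / n) * (rootMultiplicity α (p.comp^[n] X - X) : ℤ) =
      (if d ∣ n then μ (N / n) else 0) + (m - 1) * if d * r ∣ n then μ (N / n) else 0 := by
    intro n hn
    by_cases hdn : d ∣ n
    · obtain ⟨k, rfl⟩ := hdn
      have hk : k ≠ 0 := right_ne_zero_of_mul (Nat.pos_of_mem_divisors hn).ne'
      rw [iterate_comp_X_mul, rootMultiplicity_iterate_comp_X_sub_X_of_isFixedPt hg hgα hk]
      simp only [Nat.mul_dvd_mul_iff_left hd, dvd_mul_right, if_true]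
      split_ifs <;> push_cast <;> ring
    · have hdrn : ¬ d * r ∣ n := fun h => hdn (dvd_trans (dvd_mul_right d r) h)
      rw [rootMultiplicity_eq_zero (mt isRoot_iterate_comp_X_sub_X.mp
        (mt IsPeriodicPt.minimalPeriod_dvd hdn))]
      simp [hdn, hdrn]
  have hm : d * r = N → 1 ≤ m := fun h => by
    have hroot : (g.comp^[r] X - X).IsRoot α := by
      rw [← iterate_comp_X_mul, h, isRoot_iterate_comp_X_sub_X]
      exact hα
    have hne : g.comp^[r] X - X ≠ 0 := by
      rw [← iterate_comp_X_mul, h]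
      exact iterate_comp_X_sub_X_ne_zero hp hN
    simp only [m]
    exact_mod_cast (rootMultiplicity_pos hne).mpr hroot
  rw [Finset.sum_congr rfl hterm, Finset.sum_add_distrib, ← Finset.mul_sum,
    Nat.sum_divisors_moebius_ite_dvd hN, Nat.sum_divisors_moebius_ite_dvd hN]
  split_ifs <;> grind

end CommRing

section Field

theorem sum_rootMultiplicity_eq_natDegree {k : Type*} [Field k] [IsAlgClosed k] {p : k[X]}
    {s : Finset k} (hs : ∀ a, p.IsRoot a → a ∈ s) :
    ∑ a ∈ s, rootMultiplicity a p = p.natDegree := by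
  classical
  rw [← IsAlgClosed.card_roots_eq_natDegree,
    ← Multiset.sum_count_eq_card fun a ha => hs a (isRoot_of_mem_roots ha)]
  simp only [count_roots]

theorem card_filter_minimalPeriod_eq_le {L : Type*} [Field L] [IsAlgClosed L] [CharZero L]
    [DecidableEq L] {p : L[X]} (hp : 1 < p.natDegree) {N : ℕ} (hN : N ≠ 0) :
    (((p.comp^[N] X - X).roots.toFinset.filter (minimalPeriod (p.eval ·) · = N)).card : ℤ) ≤
      ∑ n ∈ N.divisors, μ (N / n) * (p.natDegree : ℤ) ^ n := by
  set S := (p.comp^[N] X - X).roots.toFinset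
  have hS : ∀ α, α ∈ S ↔ IsPeriodicPt (p.eval ·) N α := fun α => by
    rw [Multiset.mem_toFinset, mem_roots (iterate_comp_X_sub_X_ne_zero hp hN),
      isRoot_iterate_comp_X_sub_X]
  have hdeg : ∀ n ∈ N.divisors, ∑ α ∈ S, rootMultiplicity α (p.comp^[n] X - X) =
      p.natDegree ^ n := fun n hn => by
    rw [sum_rootMultiplicity_eq_natDegree fun α hα => (hS α).mpr
        ((isRoot_iterate_comp_X_sub_X.mp hα).trans_dvd (Nat.dvd_of_mem_divisors hn)),
      natDegree_iterate_comp_X_sub_X hp (Nat.pos_of_mem_divisors hn).ne']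
  calc ((S.filter (minimalPeriod (p.eval ·) · = N)).card : ℤ)
      = ∑ α ∈ S, if minimalPeriod (p.eval ·) α = N then 1 else 0 := by
        rw [Finset.card_filter]; push_cast; rfl
    _ ≤ ∑ α ∈ S, ∑ n ∈ N.divisors, μ (N / n) * (rootMultiplicity α (p.comp^[n] X - X) : ℤ) :=
        Finset.sum_le_sum fun α hα =>
          ite_le_sum_divisors_moebius_mul_rootMultiplicity hp hN ((hS α).mp hα)
    _ = ∑ n ∈ N.divisors, μ (N / n) * (p.natDegree : ℤ) ^ n := by
        rw [Finset.sum_comm]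
        refine Finset.sum_congr rfl fun n hn => ?_
        simp only [← Finset.mul_sum, ← Nat.cast_sum, hdeg n hn, Nat.cast_pow]

theorem encard_setOf_minimalPeriod_eq_le {K : Type*} [Field K] [CharZero K] {p : K[X]}
    (hp : 1 < p.natDegree) {N : ℕ} (hN : N ≠ 0) :
    {α : K | minimalPeriod (p.eval ·) α = N}.encard ≤
      ((∑ n ∈ N.divisors, μ (N / n) * (p.natDegree : ℤ) ^ n).toNat : ℕ∞) := by
  classical
  let ι := algebraMap K (AlgebraicClosure K)
  set q := p.map ι
  have hq : q.natDegree = p.natDegree := natDegree_map ι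
  have hsemi : Semiconj ι (p.eval ·) (q.eval ·) := fun x => by
    simp only [q, eval_map, eval₂_at_apply]
  set T := (q.comp^[N] X - X).roots.toFinset.filter (minimalPeriod (q.eval ·) · = N)
  have himg : ι '' {α : K | minimalPeriod (p.eval ·) α = N} ⊆ T := by
    rintro _ ⟨α, hα, rfl⟩
    have hper : minimalPeriod (q.eval ·) (ι α) = N :=
      (hsemi.minimalPeriod_apply_eq ι.injective α).trans hα
    refine Finset.mem_coe.mpr (Finset.mem_filter.mpr ⟨?_, hper⟩)
    rw [Multiset.mem_toFinset, mem_roots (iterate_comp_X_sub_X_ne_zero (hq ▸ hp) hN),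
      isRoot_iterate_comp_X_sub_X]
    exact hper ▸ isPeriodicPt_minimalPeriod _ _
  have hT := card_filter_minimalPeriod_eq_le (hq ▸ hp) hN
  rw [hq] at hT
  calc _ = (ι '' {α : K | minimalPeriod (p.eval ·) α = N}).encard :=
        (ι.injective.injOn.encard_image).symm
    _ ≤ (T : Set _).encard := Set.encard_le_encard himg
    _ = T.card := Set.encard_coe_eq_coe_finsetCard T
    _ ≤ _ := by exact_mod_cast Int.toNat_le_toNat hT

end Field

end Polynomial

section Quadratic

variable {K : Type*} [Field K]

theorem encard_setOf_sq_eq_zero_or_two_iff [NeZero (2 : K)] (a : K) :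
    ({x : K | x ^ 2 = a}.encard = 0 ∨ {x : K | x ^ 2 = a}.encard = 2) ↔ a ≠ 0 := by
  refine ⟨?_, fun ha => ?_⟩
  · rintro h rfl
    simp [pow_eq_zero_iff] at h
  by_cases h : ∃ s : K, s ^ 2 = a
  · obtain ⟨s, rfl⟩ := h
    right
    have hs : s ≠ 0 := by rintro rfl; simp at ha
    have hset : {x : K | x ^ 2 = s ^ 2} = {s, -s} := by
      ext x
      simp [sq_eq_sq_iff_eq_or_eq_neg]
    rw [hset, Set.encard_pair]
    intro h
    have : (2 : K) * s = 0 := by linear_combination h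
    exact hs ((mul_eq_zero.mp this).resolve_left two_ne_zero)
  · left
    rw [Set.encard_eq_zero, Set.eq_empty_iff_forall_notMem]
    exact fun x hx => h ⟨x, hx⟩

theorem encard_setOf_sq_add_eq_self [NeZero (2 : K)] (c : K) :
    {x : K | x ^ 2 + c = x}.encard = {y : K | y ^ 2 = 1 - 4 * c}.encard := by
  have h2 : (2 : K) ≠ 0 := two_ne_zero
  have h4 : (4 : K) ≠ 0 := by
    rw [show (4 : K) = 2 * 2 by norm_num]
    exact mul_ne_zero h2 h2
  have hbij : Bijective fun x : K => 2 * x - 1 := bijective_iff_has_inverse.mpr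
    ⟨fun y => (y + 1) / 2, fun x => by field_simp; ring, fun y => by field_simp; ring⟩
  have hset : {x : K | x ^ 2 + c = x} = (fun x => 2 * x - 1) ⁻¹' {y | y ^ 2 = 1 - 4 * c} := by
    ext x
    simp only [Set.mem_ofPred_eq, Set.mem_preimage]
    constructor <;> intro h
    · linear_combination 4 * h
    · exact mul_left_cancel₀ h4 (by linear_combination h)
  rw [hset, Set.encard_preimage_of_bijective hbij]

theorem encard_setOf_minimalPeriod_sq_add_le [CharZero K] (c : K) {N : ℕ} (hN : N ≠ 0) :
    {α : K | minimalPeriod (fun z => z ^ 2 + c) α = N}.encard ≤ ((DD N).toNat : ℕ∞) := by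
  have h := encard_setOf_minimalPeriod_eq_le (p := X ^ 2 + C c)
    (by rw [natDegree_X_pow_add_C]; norm_num) hN
  simpa [natDegree_X_pow_add_C, DD] using h

end Quadratic

/-- Let `K` be a number field and `c ∈ K`, `f = f_c(z) = z² + c`.
(1) The graph `G(f_c, K)` is admissible — every `K`-rational preperiodic point has `0`
or `2` `K`-rational preimages, and for every `N ≥ 2` there are at most `D(N)` points of
exact period `N` in `K` — if and only if `0` is not preperiodic for `f_c`.
(2) `G(f_c, K)` is strongly admissible — admissible, and `f_c` has `0` or `2` fixed
points in `K` — if and only if `0` is not preperiodic for `f_c` and `c ≠ 1/4`. -/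
theorem stmt7 (K : Type) [Field K] [NumberField K] (c : K)
    (f : K → K) (hf : ∀ z, f z = z ^ 2 + c) :
    (((∀ β : K, (∃ m n : ℕ, m < n ∧ f^[m] β = f^[n] β) →
        ({α : K | f α = β}.encard = 0 ∨ {α : K | f α = β}.encard = 2)) ∧
      (∀ N : ℕ, 2 ≤ N →
        {α : K | f^[N] α = α ∧ ∀ k, 0 < k → k < N → f^[k] α ≠ α}.encard
          ≤ ((DD N).toNat : ℕ∞)))
      ↔ ¬ (∃ m n : ℕ, m < n ∧ f^[m] (0 : K) = f^[n] (0 : K))) ∧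
    (((∀ β : K, (∃ m n : ℕ, m < n ∧ f^[m] β = f^[n] β) →
        ({α : K | f α = β}.encard = 0 ∨ {α : K | f α = β}.encard = 2)) ∧
      (∀ N : ℕ, 2 ≤ N →
        {α : K | f^[N] α = α ∧ ∀ k, 0 < k → k < N → f^[k] α ≠ α}.encard
          ≤ ((DD N).toNat : ℕ∞)) ∧
      ({α : K | f α = α}.encard = 0 ∨ {α : K | f α = α}.encard = 2))
      ↔ (¬ (∃ m n : ℕ, m < n ∧ f^[m] (0 : K) = f^[n] (0 : K)) ∧ c ≠ 1 / 4)) := by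
  obtain rfl : f = fun z => z ^ 2 + c := funext hf
  have hperiod : ∀ N : ℕ, 2 ≤ N →
      {α : K | (fun z => z ^ 2 + c)^[N] α = α ∧
        ∀ k, 0 < k → k < N → (fun z => z ^ 2 + c)^[k] α ≠ α}.encard ≤ ((DD N).toNat : ℕ∞) :=
    fun N hN => by
      have h := encard_setOf_minimalPeriod_sq_add_le c (by omega : N ≠ 0)
      simp only [minimalPeriod_eq_iff_of_pos (by omega : 0 < N)] at h
      exact h
  have hpreimage : ∀ β : K, ({α : K | α ^ 2 + c = β}.encard = 0 ∨
      {α : K | α ^ 2 + c = β}.encard = 2) ↔ β ≠ c := fun β => by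
    simpa only [← eq_sub_iff_add_eq, sub_ne_zero] using encard_setOf_sq_eq_zero_or_two_iff (β - c)
  have hadmissible : (∀ β : K, IsPreperiodicPt (fun z => z ^ 2 + c) β →
      ({α : K | α ^ 2 + c = β}.encard = 0 ∨ {α : K | α ^ 2 + c = β}.encard = 2)) ↔
      ¬ IsPreperiodicPt (fun z => z ^ 2 + c) 0 := by
    have hc := isPreperiodicPt_apply_iff (f := fun z : K => z ^ 2 + c) (x := 0)
    simp only [hpreimage, zero_pow two_ne_zero, zero_add] at hc ⊢
    exact ⟨fun h h0 => h c (hc.mpr h0) rfl, fun h β hβ hβc => h (hc.mp (hβc ▸ hβ))⟩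
  have hfixed : ({α : K | α ^ 2 + c = α}.encard = 0 ∨ {α : K | α ^ 2 + c = α}.encard = 2) ↔
      c ≠ 1 / 4 := by
    rw [encard_setOf_sq_add_eq_self, encard_setOf_sq_eq_zero_or_two_iff, sub_ne_zero]
    exact not_congr ⟨fun h => by linear_combination -h / 4, fun h => by rw [h]; norm_num⟩
  exact ⟨⟨fun h => hadmissible.mp h.1, fun h => ⟨hadmissible.mpr h, hperiod⟩⟩,
    ⟨fun h => ⟨hadmissible.mp h.1, hfixed.mp h.2.2⟩,
      fun h => ⟨hadmissible.mpr h.1, hperiod, hfixed.mpr h.2⟩⟩⟩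
end
end

section
/- Let G be an admissible graph and let H be an admissible subgraph of G, i.e., the subgraph induced on a subset of the vertices of G that is closed under the vertex map g and under the negation P ↦ −P. If P is a minimal generating set for G and Q is a minimal generating set for H, then |P| ≥ |Q|. -/
noncomputable section

/-- A vertex `p` has exact period `N` under the map `g`. -/
def ExactPeriod {V : Type*} (g : V → V) (N : ℕ) (p : V) : Prop :=
  g^[N] p = p ∧ ∀ k, 0 < k → k < N → g^[k] p ≠ p

/-- `Ō(p) = {±g^k(p) : k ≥ 0}`, where `neg` is the negation map of an admissible graph. -/
def OrbitBar {V : Type*} (g : V → V) (neg : V → V) (p : V) : Set V :=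
  {q | ∃ k : ℕ, q = g^[k] p ∨ q = neg (g^[k] p)}

/-!
Since `g (-x) = g x`, the orbits of `x` and `-x` agree from the first step on. Hence, for a
vertex `p` whose `Ō(p)` meets the admissible subgraph `W`, the first vertex `r` of `Ō(p)` that
lands in `W` (along `p, g p, g² p, …`, taking `g^k p` over `-g^k p` when both lie in `W`)
satisfies `Ō(p) ∩ W ⊆ Ō(r)`. Sending each generator of `G` to such an `r` produces a generating
set of `H` with no more elements, so a minimal one for `H` is at most as large.
-/

section

variable {V : Type*} {g neg : V → V}

theorem iterate_sub_eq_of_lt (hneg : ∀ x, g (neg x) = g x) {p x : V} {k m : ℕ} (hkm : k < m)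
    (hx : x = g^[k] p ∨ x = neg (g^[k] p)) : g^[m - k] x = g^[m] p := by
  obtain ⟨n, rfl⟩ : ∃ n, m = n + 1 + k := ⟨m - k - 1, by omega⟩
  rw [Nat.add_sub_cancel, Function.iterate_add_apply g (n + 1) k]
  rcases hx with rfl | rfl
  · rfl
  · rw [Function.iterate_succ_apply, Function.iterate_succ_apply, hneg]

namespace OrbitBar

theorem mem_of_lt (hneg : ∀ x, g (neg x) = g x) {p x q : V} {k m : ℕ} (hkm : k < m)
    (hx : x = g^[k] p ∨ x = neg (g^[k] p)) (hq : q = g^[m] p ∨ q = neg (g^[m] p)) :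
    q ∈ OrbitBar g neg x :=
  ⟨m - k, by rwa [iterate_sub_eq_of_lt hneg hkm hx]⟩

theorem exists_mem_inter_subset (hneg : ∀ x, g (neg x) = g x) {W : Set V} (hW : W.Nonempty)
    (p : V) : ∃ r ∈ W, OrbitBar g neg p ∩ W ⊆ OrbitBar g neg r := by
  classical
  by_cases h : ∃ k, g^[k] p ∈ W ∨ neg (g^[k] p) ∈ W
  swap
  · obtain ⟨w, hw⟩ := hW
    refine ⟨w, hw, ?_⟩
    rintro q ⟨⟨m, rfl | rfl⟩, hqW⟩
    exacts [absurd ⟨m, .inl hqW⟩ h, absurd ⟨m, .inr hqW⟩ h]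
  have hfirst : ∀ q ∈ W, ∀ m, (q = g^[m] p ∨ q = neg (g^[m] p)) → Nat.find h ≤ m := by
    rintro q hqW m (rfl | rfl)
    exacts [Nat.find_min' h (.inl hqW), Nat.find_min' h (.inr hqW)]
  by_cases hk : g^[Nat.find h] p ∈ W
  · refine ⟨_, hk, ?_⟩
    rintro q ⟨⟨m, hq⟩, hqW⟩
    rcases (hfirst q hqW m hq).lt_or_eq with hlt | rfl
    · exact mem_of_lt hneg hlt (.inl rfl) hq
    · exact ⟨0, hq⟩
  · refine ⟨_, (Nat.find_spec h).resolve_left hk, ?_⟩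
    rintro q ⟨⟨m, hq⟩, hqW⟩
    rcases (hfirst q hqW m hq).lt_or_eq with hlt | rfl
    · exact mem_of_lt hneg hlt (.inr rfl) hq
    · rcases hq with rfl | rfl
      exacts [absurd hqW hk, ⟨0, .inl rfl⟩]

theorem exists_generating_subset (hneg : ∀ x, g (neg x) = g x) (W P : Finset V)
    (hP : ∀ q ∈ W, ∃ p ∈ P, q ∈ OrbitBar g neg p) :
    ∃ S ⊆ W, S.card ≤ P.card ∧ ∀ q ∈ W, ∃ s ∈ S, q ∈ OrbitBar g neg s := by
  classical
  rcases W.eq_empty_or_nonempty with rfl | hW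
  · exact ⟨∅, by simp⟩
  choose r hrW hr using exists_mem_inter_subset hneg (Finset.coe_nonempty.mpr hW)
  refine ⟨P.image r, fun s hs => ?_, Finset.card_image_le, fun q hq => ?_⟩
  · obtain ⟨p, -, rfl⟩ := Finset.mem_image.mp hs
    exact hrW p
  · obtain ⟨p, hp, hqp⟩ := hP q hq
    exact ⟨r p, Finset.mem_image_of_mem r hp, hr p ⟨hqp, hq⟩⟩

end OrbitBar

end

theorem stmt10_general (V : Type)
    (g neg : V → V)
    (hneg : ∀ P : V, neg P ≠ P ∧ g (neg P) = g P)
    (W : Finset V)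
    (P : Finset V)
    (hPgen : ∀ Q : V, ∃ p ∈ P, Q ∈ OrbitBar g neg p)
    (Q : Finset V)
    (hQmin : ∀ S : Finset V, S ⊆ W → (∀ q ∈ W, ∃ p ∈ S, q ∈ OrbitBar g neg p) →
      Q.card ≤ S.card) :
    Q.card ≤ P.card := by
  obtain ⟨S, hSW, hSP, hS⟩ :=
    OrbitBar.exists_generating_subset (fun x => (hneg x).2) W P fun q _ => hPgen q
  exact (hQmin S hSW hS).trans hSP

/-- Let `G` be an admissible graph and `H` an admissible subgraph,
induced on a vertex subset `W` closed under the vertex map `g` and the negation map.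
If `P` is a minimal generating set for `G` and `Q` is a minimal generating set for `H`,
then `|P| ≥ |Q|`. -/
theorem stmt10 (V : Type) [Fintype V] [DecidableEq V]
    (g neg : V → V)
    (hneg : ∀ P : V, neg P ≠ P ∧ g (neg P) = g P)
    (hfiber : ∀ y : V, ({p : V | g p = y}).ncard = 0 ∨ ({p : V | g p = y}).ncard = 2)
    (hcycle : ∀ N : ℕ, 2 ≤ N → (({p : V | ExactPeriod g N p}).ncard : ℤ) ≤ DD N)
    (W : Finset V) (hWg : ∀ p ∈ W, g p ∈ W) (hWneg : ∀ p ∈ W, neg p ∈ W)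
    (P : Finset V)
    (hPgen : ∀ Q : V, ∃ p ∈ P, Q ∈ OrbitBar g neg p)
    (hPmin : ∀ S : Finset V, (∀ Q : V, ∃ p ∈ S, Q ∈ OrbitBar g neg p) → P.card ≤ S.card)
    (Q : Finset V) (hQW : Q ⊆ W)
    (hQgen : ∀ q ∈ W, ∃ p ∈ Q, q ∈ OrbitBar g neg p)
    (hQmin : ∀ S : Finset V, S ⊆ W → (∀ q ∈ W, ∃ p ∈ S, q ∈ OrbitBar g neg p) →
      Q.card ≤ S.card) :
    Q.card ≤ P.card :=
  stmt10_general V g neg hneg W P hPgen Q hQmin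
end
end

section
/- Let G be an admissible graph with vertex map g, minimally generated by the ordered list P₁,…,Pₙ. For 0 ≤ i ≤ n let G_i denote the smallest admissible subgraph of G containing P₁,…,P_i (so G₀ is empty, and G_i has vertex set Ō(P₁) ∪ … ∪ Ō(P_i)), and let H_i be the set of vertices in G_i but not in G_{i−1}. Let D = {i : O(P_i) ∩ G_{i−1} = ∅}; for i ∉ D, let κ_i = min{k ≥ 0 : g^k(P_i) ∈ G_{i−1}}, let j_i be the unique index j with g^{κ_i}(P_i) ∈ H_j, and let λ_i = min{ℓ ≥ 0 : g^ℓ(P_{j_i}) = −g^{κ_i}(P_i)} (these are well defined). Let G' be an admissible graph with vertex map g', generated by the list P'₁,…,P'ₙ, with G'_i and H'_i defined analogously. Then there exists a directed graph isomorphism G → G' sending P_i to P'_i for all i if and only if for every i ∈ {1,…,n}: (A) if i ∈ D, then O(P'_i) ∩ G'_{i−1} = ∅ and P'_i has the same preperiod M_i and eventual period N_i as P_i; and (B) if i ∉ D, then O(P'_i) ∩ G'_{i−1} ≠ ∅ and g'^{κ_i}(P'_i) = −g'^{λ_i}(P'_{j_i}). -/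
/-!
Every vertex of `G` has the form `±g^k(P j)`, so an isomorphism `G → G'` sending `P` to `P'`
exists iff the two graphs satisfy the same equations between such signed words. By induction
on `i`, the criterion forces the relations among words in `P 0, …, P (i-1)` to agree. If the
orbit of `P i` misses the subgraph generated by the earlier generators, its words form a new
component whose relations are governed by preperiod and period alone. Otherwise the orbit first
enters that subgraph at time `κ`, in a vertex `-g^λ(P j)` (minimality of the generators rules
out an unsigned entry point); from then on its words are older words, while the `2κ` words
before are pairwise distinct and new. Conversely, an isomorphism preserves all word relations,
and these imply the criterion.
-/

noncomputable section

/-- For a generating list `P : Fin n → V`, `Gset g neg P i` is the admissible subgraph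
`G_i` generated by the first `i` generators, i.e. `Ō(P 0) ∪ ⋯ ∪ Ō(P (i-1))`. -/
def Gset {V : Type*} (g neg : V → V) {n : ℕ} (P : Fin n → V) (i : ℕ) : Set V :=
  {q | ∃ j : Fin n, (j : ℕ) < i ∧ q ∈ OrbitBar g neg (P j)}

/-- The vertex `x` has preperiod exactly `M` and eventual period exactly `N` under `g`. -/
def Portrait {V : Type*} (g : V → V) (x : V) (M N : ℕ) : Prop :=
  0 < N ∧ g^[M + N] x = g^[M] x ∧
  (∀ n, 0 < n → n < N → g^[M + n] x ≠ g^[M] x) ∧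
  (∀ m, m < M → ¬ ∃ n, 0 < n ∧ g^[m + n] x = g^[m] x)

open Function Set

structure IsFiberPairing {V : Type*} (g neg : V → V) : Prop where
  neg_ne (x : V) : neg x ≠ x
  map_eq_iff (x y : V) : g x = g y ↔ y = x ∨ y = neg x

namespace IsFiberPairing

variable {V V' : Type*} {g neg : V → V} {g' neg' : V' → V'}

theorem of_ncard_fiber [Finite V] (hneg : ∀ x, neg x ≠ x ∧ g (neg x) = g x)
    (hfiber : ∀ y : V, {x | g x = y}.ncard = 0 ∨ {x | g x = y}.ncard = 2) :
    IsFiberPairing g neg where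
  neg_ne x := (hneg x).1
  map_eq_iff x y := by
    refine ⟨fun hxy => ?_, by rintro (rfl | rfl); exacts [rfl, (hneg x).2.symm]⟩
    by_contra! hy
    have : 2 < {z | g z = g x}.ncard :=
      (two_lt_ncard_iff (toFinite _)).2 ⟨x, neg x, y, rfl, (hneg x).2, hxy.symm,
        (hneg x).1.symm, hy.1.symm, hy.2.symm⟩
    rcases hfiber (g x) with h | h <;> omega

variable (h : IsFiberPairing g neg)
include h

theorem map_neg (x : V) : g (neg x) = g x :=
  ((h.map_eq_iff x (neg x)).2 (Or.inr rfl)).symm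

theorem neg_neg (x : V) : neg (neg x) = x :=
  ((h.map_eq_iff x _).1 (by rw [h.map_neg, h.map_neg])).resolve_right (h.neg_ne (neg x))

theorem neg_injective : Injective neg :=
  (Involutive.injective h.neg_neg :)

theorem eq_neg_iff {x y : V} : x = neg y ↔ g x = g y ∧ x ≠ y := by
  refine ⟨?_, fun ⟨hg, hne⟩ => ((h.map_eq_iff y x).1 hg.symm).resolve_left hne⟩
  rintro rfl
  exact ⟨h.map_neg y, h.neg_ne y⟩

theorem iterate_eq_neg_iff (x y : V) (a b : ℕ) :
    g^[a] x = neg (g^[b] y) ↔ g^[a + 1] x = g^[b + 1] y ∧ g^[a] x ≠ g^[b] y := by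
  rw [h.eq_neg_iff, iterate_succ_apply', iterate_succ_apply']

theorem map_neg_of_semiconj (h' : IsFiberPairing g' neg') {φ : V → V'} (hφ : Injective φ)
    (hsc : Semiconj φ g g') (x : V) : φ (neg x) = neg' (φ x) :=
  h'.eq_neg_iff.2 ⟨by rw [← hsc, ← hsc, h.map_neg], hφ.ne (h.neg_ne x)⟩

end IsFiberPairing

section Portrait

variable {V V' : Type*} {g : V → V} {g' : V' → V'}

theorem portrait_congr {x : V} {x' : V'}
    (h : ∀ a b, g^[a] x = g^[b] x ↔ g'^[a] x' = g'^[b] x') (M N : ℕ) :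
    Portrait g x M N ↔ Portrait g' x' M N := by
  simp only [Portrait, ne_eq, h]

variable (g) in
theorem exists_portrait [Finite V] (x : V) : ∃ M N, Portrait g x M N := by
  classical
  have hrec : ∃ m c, 0 < c ∧ g^[m + c] x = g^[m] x := by
    obtain ⟨a, b, hab, he⟩ := Finite.exists_ne_map_eq_of_infinite (fun k : ℕ => g^[k] x)
    rcases lt_or_gt_of_ne hab with hlt | hlt
    · exact ⟨a, b - a, by omega, by rw [Nat.add_sub_cancel' hlt.le]; exact he.symm⟩
    · exact ⟨b, a - b, by omega, by rw [Nat.add_sub_cancel' hlt.le]; exact he⟩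
  have hper : ∃ c, 0 < c ∧ g^[Nat.find hrec + c] x = g^[Nat.find hrec] x := Nat.find_spec hrec
  exact ⟨_, _, (Nat.find_spec hper).1, (Nat.find_spec hper).2,
    fun c hc hcN he => Nat.find_min hper hcN ⟨hc, he⟩, fun m hm => Nat.find_min hrec hm⟩

theorem Portrait.iterate_eq_iff {x : V} {M N : ℕ} (h : Portrait g x M N) (a b : ℕ) :
    g^[a] x = g^[b] x ↔ a = b ∨ (M ≤ a ∧ M ≤ b ∧ (a - M) % N = (b - M) % N) := by
  obtain ⟨hN, hcyc, hmin, hpre⟩ := h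
  set y := g^[M] x
  have hy : ∀ c, M ≤ c → g^[c] x = g^[c - M] y := fun c hc => by
    rw [← iterate_add_apply, Nat.sub_add_cancel hc]
  have hyper : IsPeriodicPt g N y := by
    rw [IsPeriodicPt, IsFixedPt, ← iterate_add_apply, add_comm, hcyc]
  have hperiod : minimalPeriod g y = N := by
    refine le_antisymm (hyper.minimalPeriod_le hN) (not_lt.1 fun hlt => ?_)
    refine hmin _ (hyper.minimalPeriod_pos hN) hlt ?_
    rw [add_comm, iterate_add_apply]
    exact iterate_minimalPeriod
  have hmod : ∀ s t, g^[s] y = g^[t] y ↔ s % N = t % N := fun s t => by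
    rw [← iterate_mod_minimalPeriod_eq (n := s), ← iterate_mod_minimalPeriod_eq (n := t),
      iterate_eq_iterate_iff_of_lt_minimalPeriod (Nat.mod_lt _ (by omega))
        (Nat.mod_lt _ (by omega)), hperiod]
  have hpre' : ∀ c d, c < M → c < d → g^[c] x ≠ g^[d] x := fun c d hcM hcd he =>
    hpre c hcM ⟨d - c, by omega, by rw [Nat.add_sub_cancel' hcd.le]; exact he.symm⟩
  constructor
  · intro he
    by_cases hab : a = b
    · exact Or.inl hab
    have hMa : M ≤ a := not_lt.1 fun haM => by
      rcases lt_or_gt_of_ne hab with hlt | hlt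
      exacts [hpre' a b haM hlt he, hpre' b a (by omega) hlt he.symm]
    have hMb : M ≤ b := not_lt.1 fun hbM => by
      rcases lt_or_gt_of_ne hab with hlt | hlt
      exacts [hpre' a b (by omega) hlt he, hpre' b a hbM hlt he.symm]
    refine Or.inr ⟨hMa, hMb, ?_⟩
    rwa [hy a hMa, hy b hMb, hmod] at he
  · rintro (rfl | ⟨hMa, hMb, hab⟩)
    · rfl
    · rwa [hy a hMa, hy b hMb, hmod]

end Portrait

section Orbits

variable {V : Type*} {g neg : V → V} (hV : IsFiberPairing g neg)
include hV

theorem mapsTo_orbitBar (p : V) : MapsTo g (OrbitBar g neg p) (OrbitBar g neg p) := by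
  rintro _ ⟨k, rfl | rfl⟩ <;>
    exact ⟨k + 1, Or.inl (by rw [iterate_succ_apply']; try rw [hV.map_neg])⟩

theorem mapsTo_neg_orbitBar (p : V) : MapsTo neg (OrbitBar g neg p) (OrbitBar g neg p) := by
  rintro _ ⟨k, rfl | rfl⟩
  exacts [⟨k, Or.inr rfl⟩, ⟨k, Or.inl (hV.neg_neg _)⟩]

theorem orbitBar_subset_of_mem {p q : V} (hq : q ∈ OrbitBar g neg p) :
    OrbitBar g neg q ⊆ OrbitBar g neg p := by
  rintro _ ⟨k, rfl | rfl⟩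
  exacts [(mapsTo_orbitBar hV p).iterate k hq,
    mapsTo_neg_orbitBar hV p ((mapsTo_orbitBar hV p).iterate k hq)]

variable {n : ℕ} (P : Fin n → V)

theorem mapsTo_gset (i : ℕ) : MapsTo g (Gset g neg P i) (Gset g neg P i) :=
  fun _ ⟨j, hj, hz⟩ => ⟨j, hj, mapsTo_orbitBar hV _ hz⟩

theorem mapsTo_neg_gset (i : ℕ) : MapsTo neg (Gset g neg P i) (Gset g neg P i) :=
  fun _ ⟨j, hj, hz⟩ => ⟨j, hj, mapsTo_neg_orbitBar hV _ hz⟩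

theorem notMem_orbitBar_of_minimal
    (hgen : ∀ z, ∃ i, z ∈ OrbitBar g neg (P i))
    (hmin : ∀ S : Finset V, (∀ z, ∃ p ∈ S, z ∈ OrbitBar g neg p) → n ≤ S.card)
    {i j : Fin n} (hij : i ≠ j) : P i ∉ OrbitBar g neg (P j) := by
  classical
  intro hmem
  have hgen' : ∀ z, ∃ p ∈ (Finset.univ.erase i).image P, z ∈ OrbitBar g neg p := by
    intro z
    obtain ⟨m, hm⟩ := hgen z
    by_cases hmi : m = i
    · subst hmi
      exact ⟨P j,
        Finset.mem_image_of_mem P (Finset.mem_erase.2 ⟨hij.symm, Finset.mem_univ j⟩),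
        orbitBar_subset_of_mem hV hmem hm⟩
    · exact ⟨P m, Finset.mem_image_of_mem P (Finset.mem_erase.2 ⟨hmi, Finset.mem_univ m⟩),
        hm⟩
  have hcard := (hmin _ hgen').trans Finset.card_image_le
  rw [Finset.card_erase_of_mem (Finset.mem_univ i), Finset.card_univ, Fintype.card_fin] at hcard
  have := i.pos
  omega

end Orbits

structure Word (n : ℕ) where
  gen : Fin n
  iter : ℕ
  negated : Bool

namespace Word

variable {V : Type*} {g neg : V → V} {n : ℕ} (P : Fin n → V)

variable (g neg) in
def eval (w : Word n) : V :=
  bif w.negated then neg (g^[w.iter] (P w.gen)) else g^[w.iter] (P w.gen)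

def succ (w : Word n) : Word n := ⟨w.gen, w.iter + 1, false⟩

def flip (w : Word n) : Word n := ⟨w.gen, w.iter, !w.negated⟩

theorem gen_iterate_succ (w : Word n) (m : ℕ) : (succ^[m] w).gen = w.gen := by
  induction m with
  | zero => rfl
  | succ m ih => rw [iterate_succ_apply']; exact ih

theorem exists_eval_eq_of_mem_orbitBar {j : Fin n} {z : V} (hz : z ∈ OrbitBar g neg (P j)) :
    ∃ w : Word n, w.gen = j ∧ w.eval g neg P = z := by
  obtain ⟨k, rfl | rfl⟩ := hz
  exacts [⟨⟨j, k, false⟩, rfl, rfl⟩, ⟨⟨j, k, true⟩, rfl, rfl⟩]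

theorem eval_mem_orbitBar (w : Word n) : w.eval g neg P ∈ OrbitBar g neg (P w.gen) := by
  rcases w with ⟨j, k, _ | _⟩
  exacts [⟨k, Or.inl rfl⟩, ⟨k, Or.inr rfl⟩]

theorem eval_surjective (hgen : ∀ z, ∃ i, z ∈ OrbitBar g neg (P i)) :
    Surjective (eval g neg P) := fun z =>
  let ⟨_, hz⟩ := hgen z
  let ⟨w, _, hw⟩ := exists_eval_eq_of_mem_orbitBar P hz
  ⟨w, hw⟩

theorem mem_gset_iff {i : ℕ} {z : V} :
    z ∈ Gset g neg P i ↔ ∃ w : Word n, (w.gen : ℕ) < i ∧ w.eval g neg P = z := by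
  constructor
  · rintro ⟨j, hj, hz⟩
    obtain ⟨w, rfl, rfl⟩ := exists_eval_eq_of_mem_orbitBar P hz
    exact ⟨w, hj, rfl⟩
  · rintro ⟨w, hw, rfl⟩
    exact ⟨w.gen, hw, eval_mem_orbitBar P w⟩

theorem exists_eval_eq_notMem_gset {i : ℕ} {z : V} (hz : z ∈ Gset g neg P i) :
    ∃ w : Word n, (w.gen : ℕ) < i ∧ w.eval g neg P = z ∧ z ∉ Gset g neg P w.gen := by
  classical
  obtain ⟨w₀, hw₀, hw₀z⟩ := (mem_gset_iff P).1 hz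
  have h : ∃ m, ∃ w : Word n, (w.gen : ℕ) = m ∧ w.eval g neg P = z :=
    ⟨_, w₀, rfl, hw₀z⟩
  obtain ⟨w, hwm, hwz⟩ := Nat.find_spec h
  refine ⟨w, hwm ▸ (Nat.find_min' h ⟨w₀, rfl, hw₀z⟩).trans_lt hw₀, hwz,
    fun hz' => ?_⟩
  obtain ⟨w', hw', hw'z⟩ := (mem_gset_iff P).1 hz'
  exact Nat.find_min h (hwm ▸ hw') ⟨w', rfl, hw'z⟩

variable (hV : IsFiberPairing g neg)
include hV

theorem eval_succ (w : Word n) : w.succ.eval g neg P = g (w.eval g neg P) := by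
  rcases w with ⟨j, k, _ | _⟩
  · exact iterate_succ_apply' g k (P j)
  · exact (iterate_succ_apply' g k (P j)).trans (hV.map_neg _).symm

theorem eval_iterate_succ (w : Word n) (m : ℕ) :
    (succ^[m] w).eval g neg P = g^[m] (w.eval g neg P) :=
  Semiconj.iterate_right (f := eval g neg P) (eval_succ P hV) m w

theorem eval_flip (w : Word n) : w.flip.eval g neg P = neg (w.eval g neg P) := by
  rcases w with ⟨j, k, _ | _⟩
  exacts [rfl, (hV.neg_neg _).symm]

theorem eval_eq_eval_iff_flip (w₁ w₂ : Word n) :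
    w₁.eval g neg P = w₂.eval g neg P ↔ w₁.flip.eval g neg P = w₂.flip.eval g neg P := by
  rw [eval_flip P hV, eval_flip P hV, hV.neg_injective.eq_iff]

end Word

theorem iterate_eq_iterate_iff_of_first_entry {V : Type*} {g : V → V} {T : Set V}
    (hT : MapsTo g T T) {x : V} {κ a b : ℕ} (hκ : g^[κ] x ∈ T)
    (hmin : ∀ k < κ, g^[k] x ∉ T) (ha : a < κ) : g^[a] x = g^[b] x ↔ a = b := by
  have hinj : ∀ c d, c < d → d < κ → g^[c] x ≠ g^[d] x := fun c d hcd hd he =>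
    hmin (κ - d + c) (by omega) (by
      rw [iterate_add_apply, he, ← iterate_add_apply, Nat.sub_add_cancel hd.le]; exact hκ)
  refine ⟨fun he => ?_, fun h => h ▸ rfl⟩
  by_contra hab
  by_cases hb : κ ≤ b
  · refine hmin a ha (he ▸ ?_)
    rw [← Nat.sub_add_cancel hb, iterate_add_apply]
    exact hT.iterate _ hκ
  rcases lt_or_gt_of_ne hab with h | h
  exacts [hinj a b h (by omega) he, hinj b a h ha he.symm]

section RelationsAgree

variable {V V' : Type*} {g neg : V → V} {g' neg' : V' → V'} {n : ℕ}
  {P : Fin n → V} {P' : Fin n → V'}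

def RelationsAgree (g neg : V → V) (P : Fin n → V) (g' neg' : V' → V') (P' : Fin n → V')
    (i : ℕ) : Prop :=
  ∀ w₁ w₂ : Word n, (w₁.gen : ℕ) < i → (w₂.gen : ℕ) < i →
    (w₁.eval g neg P = w₂.eval g neg P ↔ w₁.eval g' neg' P' = w₂.eval g' neg' P')

variable (hV : IsFiberPairing g neg) (hV' : IsFiberPairing g' neg')
include hV hV'

theorem RelationsAgree.succ {I : Fin n} (hR : RelationsAgree g neg P g' neg' P' I)
    (hiter : ∀ a b, g^[a] (P I) = g^[b] (P I) ↔ g'^[a] (P' I) = g'^[b] (P' I))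
    (hold : ∀ a (w : Word n), (w.gen : ℕ) < I →
      (g^[a] (P I) = w.eval g neg P ↔ g'^[a] (P' I) = w.eval g' neg' P')) :
    RelationsAgree g neg P g' neg' P' (I + 1) := by
  have hnew : ∀ a (w : Word n), (w.gen : ℕ) < I + 1 →
      (g^[a] (P I) = w.eval g neg P ↔ g'^[a] (P' I) = w.eval g' neg' P') := by
    rintro a ⟨j, b, s⟩ hj
    rcases Nat.lt_succ_iff_lt_or_eq.1 hj with hj | hj
    · exact hold a _ hj
    obtain rfl : j = I := Fin.ext hj
    cases s
    · exact hiter a b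
    · change g^[a] (P j) = neg (g^[b] (P j)) ↔ g'^[a] (P' j) = neg' (g'^[b] (P' j))
      rw [hV.iterate_eq_neg_iff, hV'.iterate_eq_neg_iff, ne_eq, ne_eq, hiter, hiter]
  have hnew' : ∀ w₁ w₂ : Word n, w₁.gen = I → (w₂.gen : ℕ) < I + 1 →
      (w₁.eval g neg P = w₂.eval g neg P ↔ w₁.eval g' neg' P' = w₂.eval g' neg' P') := by
    rintro ⟨j, a, s⟩ w₂ rfl hw₂
    cases s
    · exact hnew a w₂ hw₂
    · rw [Word.eval_eq_eval_iff_flip P hV, Word.eval_eq_eval_iff_flip P' hV']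
      exact hnew a w₂.flip hw₂
  intro w₁ w₂ h₁ h₂
  rcases Nat.lt_succ_iff_lt_or_eq.1 h₁ with h₁ | h₁
  · rcases Nat.lt_succ_iff_lt_or_eq.1 h₂ with h₂ | h₂
    · exact hR w₁ w₂ h₁ h₂
    · rw [eq_comm, eq_comm (a := w₁.eval g' neg' P')]
      exact hnew' w₂ w₁ (Fin.ext h₂) (by omega)
  · exact hnew' w₁ w₂ (Fin.ext h₁) h₂

theorem RelationsAgree.succ_of_disjoint [Finite V] {I : Fin n}
    (hR : RelationsAgree g neg P g' neg' P' I)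
    (hD : ∀ k, g^[k] (P I) ∉ Gset g neg P I) (hD' : ∀ k, g'^[k] (P' I) ∉ Gset g' neg' P' I)
    (hport : ∀ M N, Portrait g (P I) M N ↔ Portrait g' (P' I) M N) :
    RelationsAgree g neg P g' neg' P' (I + 1) := by
  refine hR.succ hV hV' (fun a b => ?_) (fun a w hw => ?_)
  · obtain ⟨M, N, h⟩ := exists_portrait g (P I)
    rw [h.iterate_eq_iff, ((hport M N).1 h).iterate_eq_iff]
  · exact iff_of_false (fun he => hD a (he ▸ (Word.mem_gset_iff P).2 ⟨w, hw, rfl⟩))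
      (fun he => hD' a (he ▸ (Word.mem_gset_iff P').2 ⟨w, hw, rfl⟩))

theorem RelationsAgree.iterate_notMem_gset {i : ℕ} (hR : RelationsAgree g neg P g' neg' P' i)
    {x : V} {x' : V'} {κ : ℕ} (w₀ : Word n) (hw₀ : (w₀.gen : ℕ) < i)
    (he : w₀.eval g neg P = g^[κ] x) (he' : w₀.eval g' neg' P' = g'^[κ] x')
    (hmin : ∀ k < κ, g^[k] x ∉ Gset g neg P i) :
    ∀ k < κ, g'^[k] x' ∉ Gset g' neg' P' i := by
  intro k hk hmem
  have hκ : (κ - 1).succ = κ := by omega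
  have hprev : g'^[κ - 1] x' ∈ Gset g' neg' P' i := by
    have := (mapsTo_gset hV' P' i).iterate (κ - 1 - k) hmem
    rwa [← iterate_add_apply, Nat.sub_add_cancel (by omega)] at this
  obtain ⟨w, hw, hwe⟩ := (Word.mem_gset_iff P').1 hprev
  -- Transported back to `G`, this puts `g^[κ - 1] x` in the `g`-fibre of the old vertex `w`.
  have hsucc : w.succ.eval g neg P = w₀.eval g neg P := by
    refine (hR w.succ w₀ hw hw₀).2 ?_
    rw [Word.eval_succ P' hV', hwe, he', ← iterate_succ_apply' g', hκ]
  have hfib : g (w.eval g neg P) = g (g^[κ - 1] x) := by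
    rw [← Word.eval_succ P hV, hsucc, he, ← iterate_succ_apply' g, hκ]
  have hw_mem : w.eval g neg P ∈ Gset g neg P i := (Word.mem_gset_iff P).2 ⟨w, hw, rfl⟩
  rcases (hV.map_eq_iff _ _).1 hfib with h | h
  · exact hmin (κ - 1) (by omega) (h ▸ hw_mem)
  · exact hmin (κ - 1) (by omega) (h ▸ mapsTo_neg_gset hV P i hw_mem)

theorem RelationsAgree.succ_of_entry {I J : Fin n} (hR : RelationsAgree g neg P g' neg' P' I)
    (hJ : J < I) {κ lam : ℕ} (hκ : g^[κ] (P I) ∈ Gset g neg P I)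
    (hmin : ∀ k < κ, g^[k] (P I) ∉ Gset g neg P I)
    (hlam : g^[κ] (P I) = neg (g^[lam] (P J)))
    (hlam' : g'^[κ] (P' I) = neg' (g'^[lam] (P' J))) :
    RelationsAgree g neg P g' neg' P' (I + 1) := by
  let w₀ : Word n := ⟨J, lam, true⟩
  have hmin' := hR.iterate_notMem_gset hV hV' w₀ hJ hlam.symm hlam'.symm hmin
  have hκ' : g'^[κ] (P' I) ∈ Gset g' neg' P' I :=
    (Word.mem_gset_iff P').2 ⟨w₀, hJ, hlam'.symm⟩
  have hlate : ∀ a, κ ≤ a → ∃ w : Word n, (w.gen : ℕ) < I ∧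
      w.eval g neg P = g^[a] (P I) ∧ w.eval g' neg' P' = g'^[a] (P' I) := fun a ha =>
    ⟨Word.succ^[a - κ] w₀, by rw [Word.gen_iterate_succ]; exact hJ,
      by rw [Word.eval_iterate_succ P hV, show w₀.eval g neg P = _ from hlam.symm,
        ← iterate_add_apply, Nat.sub_add_cancel ha],
      by rw [Word.eval_iterate_succ P' hV', show w₀.eval g' neg' P' = _ from hlam'.symm,
        ← iterate_add_apply, Nat.sub_add_cancel ha]⟩
  refine hR.succ hV hV' (fun a b => ?_) (fun a w hw => ?_)
  · have hearly {a b : ℕ} (ha : a < κ) :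
        g^[a] (P I) = g^[b] (P I) ↔ g'^[a] (P' I) = g'^[b] (P' I) := by
      rw [iterate_eq_iterate_iff_of_first_entry (mapsTo_gset hV P I) hκ hmin ha,
        iterate_eq_iterate_iff_of_first_entry (mapsTo_gset hV' P' I) hκ' hmin' ha]
    rcases lt_or_ge a κ with ha | ha
    · exact hearly ha
    rcases lt_or_ge b κ with hb | hb
    · rw [eq_comm, eq_comm (a := g'^[a] (P' I))]
      exact hearly hb
    obtain ⟨w₁, hw₁, he₁, he₁'⟩ := hlate a ha
    obtain ⟨w₂, hw₂, he₂, he₂'⟩ := hlate b hb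
    rw [← he₁, ← he₂, ← he₁', ← he₂']
    exact hR w₁ w₂ hw₁ hw₂
  · rcases lt_or_ge a κ with ha | ha
    · exact iff_of_false (fun he => hmin a ha (he ▸ (Word.mem_gset_iff P).2 ⟨w, hw, rfl⟩))
        (fun he => hmin' a ha (he ▸ (Word.mem_gset_iff P').2 ⟨w, hw, rfl⟩))
    obtain ⟨w₁, hw₁, he₁, he₁'⟩ := hlate a ha
    rw [← he₁, ← he₁']
    exact hR w₁ w hw₁ hw

end RelationsAgree

section FirstEntry

variable {V : Type*} {g neg : V → V} (hV : IsFiberPairing g neg) {n : ℕ} {P : Fin n → V}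
  (hsep : ∀ i j, i ≠ j → P i ∉ OrbitBar g neg (P j))
include hV hsep

theorem iterate_ne_of_first_entry {I J : Fin n} (hJ : J < I) {κ : ℕ}
    (hmin : ∀ k < κ, g^[k] (P I) ∉ Gset g neg P I) (m : ℕ) :
    g^[m] (P J) ≠ g^[κ] (P I) := by
  intro he
  rcases κ with _ | κ
  · exact hsep I J hJ.ne' ⟨m, Or.inl he.symm⟩
  rcases m with _ | m
  · exact hsep J I hJ.ne ⟨κ + 1, Or.inl he⟩
  have hfib : g (g^[m] (P J)) = g (g^[κ] (P I)) := by
    rwa [← iterate_succ_apply' g, ← iterate_succ_apply' g]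
  have hprev : g^[m] (P J) ∈ Gset g neg P I := ⟨J, hJ, ⟨m, Or.inl rfl⟩⟩
  rcases (hV.map_eq_iff _ _).1 hfib with h | h
  · exact hmin κ κ.lt_succ_self (h ▸ hprev)
  · exact hmin κ κ.lt_succ_self (h ▸ mapsTo_neg_gset hV P I hprev)

theorem exists_first_entry_data {I : Fin n} (h : ∃ k, g^[k] (P I) ∈ Gset g neg P I) :
    ∃ (κ : ℕ) (J : Fin n) (lam : ℕ), J < I ∧
      (g^[κ] (P I) ∈ Gset g neg P I ∧ ∀ k < κ, g^[k] (P I) ∉ Gset g neg P I) ∧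
      (g^[κ] (P I) ∈ Gset g neg P (J + 1) ∧ g^[κ] (P I) ∉ Gset g neg P J) ∧
      (g^[lam] (P J) = neg (g^[κ] (P I)) ∧ ∀ l < lam, g^[l] (P J) ≠ neg (g^[κ] (P I))) := by
  classical
  have hmin : ∀ k < Nat.find h, g^[k] (P I) ∉ Gset g neg P I := fun k hk => Nat.find_min h hk
  obtain ⟨⟨J, m, s⟩, hJ, hwe, hnot⟩ := Word.exists_eval_eq_notMem_gset P (Nat.find_spec h)
  have hlam : ∃ l, g^[l] (P J) = neg (g^[Nat.find h] (P I)) := by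
    cases s
    · exact absurd hwe (iterate_ne_of_first_entry hV hsep hJ hmin m)
    · exact ⟨m, by rw [← hwe]; exact (hV.neg_neg _).symm⟩
  exact ⟨_, J, Nat.find hlam, hJ, ⟨Nat.find_spec h, hmin⟩,
    ⟨(Word.mem_gset_iff P).2 ⟨_, Nat.lt_succ_self _, hwe⟩, hnot⟩,
    Nat.find_spec hlam, fun l hl => Nat.find_min hlam hl⟩

end FirstEntry

section Criterion

variable {V V' : Type*} {n : ℕ}

-- Conditions (A) and (B) for the generator `P i`; in (B), `κ`, `j`, `lam` are the paper's
-- `κ_i`, `j_i`, `λ_i`, given through their defining properties.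
def CriterionA (g neg : V → V) (P : Fin n → V) (g' neg' : V' → V') (P' : Fin n → V')
    (i : Fin n) : Prop :=
  (∀ k : ℕ, g^[k] (P i) ∉ Gset g neg P (i : ℕ)) →
    (∀ k : ℕ, g'^[k] (P' i) ∉ Gset g' neg' P' (i : ℕ)) ∧
    (∀ M N : ℕ, Portrait g (P i) M N ↔ Portrait g' (P' i) M N)

def CriterionB (g neg : V → V) (P : Fin n → V) (g' neg' : V' → V') (P' : Fin n → V')
    (i : Fin n) : Prop :=
  (∃ k : ℕ, g^[k] (P i) ∈ Gset g neg P (i : ℕ)) →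
    (∃ k : ℕ, g'^[k] (P' i) ∈ Gset g' neg' P' (i : ℕ)) ∧
    (∀ (κ : ℕ) (j : Fin n) (lam : ℕ),
      (g^[κ] (P i) ∈ Gset g neg P (i : ℕ) ∧
        ∀ k, k < κ → g^[k] (P i) ∉ Gset g neg P (i : ℕ)) →
      (g^[κ] (P i) ∈ Gset g neg P ((j : ℕ) + 1) ∧
        g^[κ] (P i) ∉ Gset g neg P (j : ℕ)) →
      (g^[lam] (P j) = neg (g^[κ] (P i)) ∧
        ∀ l, l < lam → g^[l] (P j) ≠ neg (g^[κ] (P i))) →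
      g'^[κ] (P' i) = neg' (g'^[lam] (P' j)))

variable {g neg : V → V} {g' neg' : V' → V'} {P : Fin n → V} {P' : Fin n → V'}

theorem RelationsAgree.iterate_mem_gset_iff (hR : RelationsAgree g neg P g' neg' P' n)
    (I : Fin n) (k i : ℕ) :
    g'^[k] (P' I) ∈ Gset g' neg' P' i ↔ g^[k] (P I) ∈ Gset g neg P i := by
  simp only [Word.mem_gset_iff]
  exact exists_congr fun w => and_congr_right fun _ =>
    (hR w ⟨I, k, false⟩ w.gen.isLt I.isLt).symm

theorem RelationsAgree.criterionA (hR : RelationsAgree g neg P g' neg' P' n) (I : Fin n) :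
    CriterionA g neg P g' neg' P' I := fun hD =>
  ⟨fun k hk => hD k ((hR.iterate_mem_gset_iff I k I).1 hk),
    portrait_congr fun a b => hR ⟨I, a, false⟩ ⟨I, b, false⟩ I.isLt I.isLt⟩

theorem RelationsAgree.criterionB (hV : IsFiberPairing g neg)
    (hR : RelationsAgree g neg P g' neg' P' n) (I : Fin n) :
    CriterionB g neg P g' neg' P' I := fun ⟨k, hk⟩ =>
  ⟨⟨k, (hR.iterate_mem_gset_iff I k I).2 hk⟩, fun κ J lam _ _ hlam =>
    (hR ⟨I, κ, false⟩ ⟨J, lam, true⟩ I.isLt J.isLt).1 <| by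
      change g^[κ] (P I) = neg (g^[lam] (P J))
      rw [hlam.1, hV.neg_neg]⟩

theorem relationsAgree_of_criteria [Finite V] (hV : IsFiberPairing g neg)
    (hV' : IsFiberPairing g' neg') (hsep : ∀ i j, i ≠ j → P i ∉ OrbitBar g neg (P j))
    (h : ∀ i, CriterionA g neg P g' neg' P' i ∧ CriterionB g neg P g' neg' P' i) :
    RelationsAgree g neg P g' neg' P' n := by
  suffices ∀ i ≤ n, RelationsAgree g neg P g' neg' P' i from this n le_rfl
  intro i
  induction i with
  | zero => exact fun _ _ _ h₁ => absurd h₁ (Nat.not_lt_zero _)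
  | succ i ih =>
    intro hi
    let I : Fin n := ⟨i, hi⟩
    have hR : RelationsAgree g neg P g' neg' P' I := ih (Nat.le_of_succ_le hi)
    by_cases hD : ∀ k, g^[k] (P I) ∉ Gset g neg P I
    · obtain ⟨hD', hport⟩ := (h I).1 hD
      exact hR.succ_of_disjoint hV hV' hD hD' hport
    · have hentry : ∃ k, g^[k] (P I) ∈ Gset g neg P I := not_forall_not.1 hD
      obtain ⟨κ, J, lam, hJ, hκ, hHJ, hlam⟩ := exists_first_entry_data hV hsep hentry
      exact hR.succ_of_entry hV hV' hJ hκ.1 hκ.2 (by rw [hlam.1, hV.neg_neg])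
        (((h I).2 hentry).2 κ J lam hκ hHJ hlam)

end Criterion

theorem exists_bijective_comp_eq_of_eq_iff {ι α β : Type*} {e : ι → α} {e' : ι → β}
    (he : Surjective e) (he' : Surjective e') (h : ∀ i j, e i = e j ↔ e' i = e' j) :
    ∃ φ : α → β, Bijective φ ∧ ∀ i, φ (e i) = e' i := by
  refine ⟨e' ∘ surjInv he, ⟨fun x y hxy => ?_, fun y => ?_⟩,
    fun i => (h _ _).1 (surjInv_eq he _)⟩
  · rw [← surjInv_eq he x, ← surjInv_eq he y]
    exact (h _ _).2 hxy
  · obtain ⟨i, rfl⟩ := he' y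
    exact ⟨e i, (h _ _).1 (surjInv_eq he _)⟩

section Isomorphism

variable {V V' : Type*} {g neg : V → V} {g' neg' : V' → V'} {n : ℕ}
  {P : Fin n → V} {P' : Fin n → V'} (hV : IsFiberPairing g neg) (hV' : IsFiberPairing g' neg')
include hV hV'

theorem Word.map_eval {φ : V → V'} (hφ : Injective φ) (hsc : Semiconj φ g g')
    (hP : ∀ i, φ (P i) = P' i) (w : Word n) : φ (w.eval g neg P) = w.eval g' neg' P' := by
  have hiter : φ (g^[w.iter] (P w.gen)) = g'^[w.iter] (P' w.gen) :=
    (hsc.iterate_right _ _).trans (congrArg _ (hP _))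
  rcases w with ⟨j, k, _ | _⟩
  · exact hiter
  · exact (hV.map_neg_of_semiconj hV' hφ hsc _).trans (congrArg neg' hiter)

theorem exists_iso_iff_relationsAgree (hgen : Surjective (Word.eval g neg P))
    (hgen' : Surjective (Word.eval g' neg' P')) :
    (∃ φ : V → V', Bijective φ ∧ (∀ q : V, φ (g q) = g' (φ q)) ∧
        ∀ i : Fin n, φ (P i) = P' i) ↔ RelationsAgree g neg P g' neg' P' n := by
  constructor
  · rintro ⟨φ, hφ, hsc, hP⟩ w₁ w₂ - -
    rw [← Word.map_eval hV hV' hφ.1 hsc hP, ← Word.map_eval hV hV' hφ.1 hsc hP, hφ.1.eq_iff]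
  · intro hR
    obtain ⟨φ, hφ, hφe⟩ := exists_bijective_comp_eq_of_eq_iff hgen hgen'
      fun w₁ w₂ => hR w₁ w₂ w₁.gen.isLt w₂.gen.isLt
    refine ⟨φ, hφ, fun q => ?_, fun i => hφe ⟨i, 0, false⟩⟩
    obtain ⟨w, rfl⟩ := hgen q
    rw [← Word.eval_succ P hV, hφe, hφe, Word.eval_succ P' hV']

end Isomorphism

theorem stmt11_general (V V' : Type) [Fintype V] [Fintype V']
    (g neg : V → V)
    (hneg : ∀ P : V, neg P ≠ P ∧ g (neg P) = g P)
    (hfiber : ∀ y : V, ({p : V | g p = y}).ncard = 0 ∨ ({p : V | g p = y}).ncard = 2)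
    (g' neg' : V' → V')
    (hneg' : ∀ P : V', neg' P ≠ P ∧ g' (neg' P) = g' P)
    (hfiber' : ∀ y : V', ({p : V' | g' p = y}).ncard = 0 ∨ ({p : V' | g' p = y}).ncard = 2)
    (n : ℕ) (P : Fin n → V)
    (hPgen : ∀ Q : V, ∃ i : Fin n, Q ∈ OrbitBar g neg (P i))
    (hPmin : ∀ S : Finset V, (∀ Q : V, ∃ p ∈ S, Q ∈ OrbitBar g neg p) → n ≤ S.card)
    (P' : Fin n → V')
    (hP'gen : ∀ Q : V', ∃ i : Fin n, Q ∈ OrbitBar g' neg' (P' i)) :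
    (∃ φ : V → V', Function.Bijective φ ∧ (∀ q : V, φ (g q) = g' (φ q)) ∧
        ∀ i : Fin n, φ (P i) = P' i)
    ↔ ∀ i : Fin n,
        ((∀ k : ℕ, g^[k] (P i) ∉ Gset g neg P (i : ℕ)) →
          (∀ k : ℕ, g'^[k] (P' i) ∉ Gset g' neg' P' (i : ℕ)) ∧
          (∀ M N : ℕ, Portrait g (P i) M N ↔ Portrait g' (P' i) M N)) ∧
        ((∃ k : ℕ, g^[k] (P i) ∈ Gset g neg P (i : ℕ)) →
          (∃ k : ℕ, g'^[k] (P' i) ∈ Gset g' neg' P' (i : ℕ)) ∧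
          (∀ (κ : ℕ) (j : Fin n) (lam : ℕ),
            (g^[κ] (P i) ∈ Gset g neg P (i : ℕ) ∧
              ∀ k, k < κ → g^[k] (P i) ∉ Gset g neg P (i : ℕ)) →
            (g^[κ] (P i) ∈ Gset g neg P ((j : ℕ) + 1) ∧
              g^[κ] (P i) ∉ Gset g neg P (j : ℕ)) →
            (g^[lam] (P j) = neg (g^[κ] (P i)) ∧
              ∀ l, l < lam → g^[l] (P j) ≠ neg (g^[κ] (P i))) →
            g'^[κ] (P' i) = neg' (g'^[lam] (P' j)))) := by
  have hV := IsFiberPairing.of_ncard_fiber hneg hfiber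
  have hV' := IsFiberPairing.of_ncard_fiber hneg' hfiber'
  rw [exists_iso_iff_relationsAgree hV hV' (Word.eval_surjective P hPgen)
    (Word.eval_surjective P' hP'gen)]
  exact ⟨fun hR i => ⟨hR.criterionA i, hR.criterionB hV i⟩,
    relationsAgree_of_criteria hV hV' fun _ _ => notMem_orbitBar_of_minimal hV P hPgen hPmin⟩

/-- isomorphism criterion for admissible graphs.  Let `G` be an
admissible graph (vertex map `g`, negation `neg`) minimally generated by the ordered
list `P 0, …, P (n-1)`, and `G'` an admissible graph (vertex map `g'`, negation `neg'`)
generated by `P' 0, …, P' (n-1)`.  There is a directed graph isomorphism `G → G'`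
sending `P i ↦ P' i` iff for every `i`: if `O(P i)` is disjoint from `G_{i-1}` then
`O(P' i)` is disjoint from `G'_{i-1}` and `P' i` has the same preperiod and eventual
period as `P i`; and if `O(P i)` meets `G_{i-1}` then `O(P' i)` meets `G'_{i-1}` and
`g'^{κ_i}(P'_i) = −g'^{λ_i}(P'_{j_i})`, where `κ_i, j_i, λ_i` are characterized by:
`κ_i` is least with `g^{κ_i}(P i) ∈ G_{i-1}`, `j_i` is the unique `j` with
`g^{κ_i}(P i) ∈ H_j = G_j \ G_{j-1}`, and `λ_i` is least with
`g^{λ_i}(P (j_i)) = −g^{κ_i}(P i)`. -/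
theorem stmt11 (V V' : Type) [Fintype V] [DecidableEq V] [Fintype V'] [DecidableEq V']
    (g neg : V → V)
    (hneg : ∀ P : V, neg P ≠ P ∧ g (neg P) = g P)
    (hfiber : ∀ y : V, ({p : V | g p = y}).ncard = 0 ∨ ({p : V | g p = y}).ncard = 2)
    (hcycle : ∀ N : ℕ, 2 ≤ N → (({p : V | ExactPeriod g N p}).ncard : ℤ) ≤ DD N)
    (g' neg' : V' → V')
    (hneg' : ∀ P : V', neg' P ≠ P ∧ g' (neg' P) = g' P)
    (hfiber' : ∀ y : V', ({p : V' | g' p = y}).ncard = 0 ∨ ({p : V' | g' p = y}).ncard = 2)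
    (hcycle' : ∀ N : ℕ, 2 ≤ N → (({p : V' | ExactPeriod g' N p}).ncard : ℤ) ≤ DD N)
    (n : ℕ) (P : Fin n → V) (hPinj : Function.Injective P)
    (hPgen : ∀ Q : V, ∃ i : Fin n, Q ∈ OrbitBar g neg (P i))
    (hPmin : ∀ S : Finset V, (∀ Q : V, ∃ p ∈ S, Q ∈ OrbitBar g neg p) → n ≤ S.card)
    (P' : Fin n → V')
    (hP'gen : ∀ Q : V', ∃ i : Fin n, Q ∈ OrbitBar g' neg' (P' i)) :
    (∃ φ : V → V', Function.Bijective φ ∧ (∀ q : V, φ (g q) = g' (φ q)) ∧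
        ∀ i : Fin n, φ (P i) = P' i)
    ↔ ∀ i : Fin n,
        ((∀ k : ℕ, g^[k] (P i) ∉ Gset g neg P (i : ℕ)) →
          (∀ k : ℕ, g'^[k] (P' i) ∉ Gset g' neg' P' (i : ℕ)) ∧
          (∀ M N : ℕ, Portrait g (P i) M N ↔ Portrait g' (P' i) M N)) ∧
        ((∃ k : ℕ, g^[k] (P i) ∈ Gset g neg P (i : ℕ)) →
          (∃ k : ℕ, g'^[k] (P' i) ∈ Gset g' neg' P' (i : ℕ)) ∧
          (∀ (κ : ℕ) (j : Fin n) (lam : ℕ),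
            (g^[κ] (P i) ∈ Gset g neg P (i : ℕ) ∧
              ∀ k, k < κ → g^[k] (P i) ∉ Gset g neg P (i : ℕ)) →
            (g^[κ] (P i) ∈ Gset g neg P ((j : ℕ) + 1) ∧
              g^[κ] (P i) ∉ Gset g neg P (j : ℕ)) →
            (g^[lam] (P j) = neg (g^[κ] (P i)) ∧
              ∀ l, l < lam → g^[l] (P j) ≠ neg (g^[κ] (P i))) →
            g'^[κ] (P' i) = neg' (g'^[lam] (P' j)))) :=
  stmt11_general V V' g neg hneg hfiber g' neg' hneg' hfiber' n P hPgen hPmin P' hP'gen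
end
end
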